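/- arXiv:2101.01704 — 2 statements merged into one kernel-verified Lean document; each statement's English description precedes it below -/
import Mathlib

section
/- Suppose H0 holds. Then: (i) the function D̄_C : int(dom φ) → ℝ, D̄_C(x) = E[D_{C_ξ}(x)], is lower semicontinuous; (ii) for every x ∈ int(dom φ), x ∈ C if and only if D̄_C(x) = 0. -/
open Set Filter Topology MeasureTheory ProbabilityTheory
open scoped InnerProductSpace ENNReal Classical

noncomputable section

/-- A Legendre function on a Euclidean space `X`, represented by its (finite) values `f` on its
effective domain `dom`, together with the data of its Fenchel conjugate (`conj` on `domConj`)
and the gradients of both. -/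
structure LegendreFn (X : Type*) [NormedAddCommGroup X] [InnerProductSpace ℝ X]
    [FiniteDimensional ℝ X] where
  /-- the values of `φ` on its domain -/
  f : X → ℝ
  /-- the effective domain of `φ` (`φ = +∞` outside of it) -/
  dom : Set X
  /-- the values of the Fenchel conjugate `φ*` on its domain -/
  conj : X → ℝ
  /-- the effective domain of `φ*` -/
  domConj : Set X
  /-- the gradient of `φ` (meaningful on `interior dom`) -/
  grad : X → X
  /-- the gradient of `φ*` (meaningful on `interior domConj`) -/
  gradConj : X → X
  dom_nonempty : dom.Nonempty
  int_dom_nonempty : (interior dom).Nonempty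
  dom_convex : Convex ℝ dom
  convexOn : ConvexOn ℝ dom f
  /-- `φ` is closed: the epigraph of the extended function is closed -/
  closedEpi : IsClosed {p : X × ℝ | p.1 ∈ dom ∧ f p.1 ≤ p.2}
  /-- essential smoothness, part 1: differentiability on the interior of the domain -/
  hasGrad : ∀ x ∈ interior dom, HasGradientAt f (grad x) x
  /-- essential smoothness, part 2: the gradient blows up at the boundary -/
  grad_blowup : ∀ (u : ℕ → X) (x : X), (∀ n, u n ∈ interior dom) → x ∈ frontier dom →
      Tendsto u atTop (nhds x) → Tendsto (fun n => ‖grad (u n)‖) atTop atTop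
  /-- `domConj` is the set where the conjugate supremum is finite -/
  domConj_spec : ∀ y : X, y ∈ domConj ↔ BddAbove ((fun x => ⟪x, y⟫_ℝ - f x) '' dom)
  /-- `conj` is the Fenchel conjugate of `φ` -/
  conj_spec : ∀ y ∈ domConj, IsLUB ((fun x => ⟪x, y⟫_ℝ - f x) '' dom) (conj y)
  int_domConj_nonempty : (interior domConj).Nonempty
  /-- essential strict convexity: `φ` is strictly convex on every convex subset of `dom ∂φ` -/
  strict : ∀ s : Set X,
      s ⊆ {x ∈ dom | ∃ v : X, ∀ z ∈ dom, f x + ⟪v, z - x⟫_ℝ ≤ f z} →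
      Convex ℝ s → StrictConvexOn ℝ s f
  hasGradConj : ∀ y ∈ interior domConj, HasGradientAt conj (gradConj y) y
  /-- Bregman projections onto closed convex sets meeting `interior dom` exist
  (Bauschke–Borwein). -/
  proj_exists : ∀ S : Set X, IsClosed S → Convex ℝ S → (S ∩ interior dom).Nonempty →
      ∀ x ∈ interior dom, ∃ p ∈ S ∩ interior dom, ∀ z ∈ S ∩ dom,
        f p - ⟪p, grad x⟫_ℝ ≤ f z - ⟪z, grad x⟫_ℝ

namespace LegendreFn

variable {X : Type*} [NormedAddCommGroup X] [InnerProductSpace ℝ X] [FiniteDimensional ℝ X]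

/-- The Bregman distance `D_φ(x, y)`; the formula is meaningful for `x ∈ dom φ` and
`y ∈ int (dom φ)`. -/
def breg (L : LegendreFn X) (x y : X) : ℝ :=
  L.f x - L.f y - ⟪x - y, L.grad y⟫_ℝ

/-- The Bregman distance from the point `y` to the set `S`: `D_S(y) = inf_{z ∈ S} D_φ(z, y)`. -/
def distTo (L : LegendreFn X) (S : Set X) (y : X) : ℝ :=
  sInf ((fun z => L.breg z y) '' (S ∩ L.dom))

/-- `p` is the Bregman projection of `x` onto `S`. -/
def IsBregProj (L : LegendreFn X) (S : Set X) (x p : X) : Prop :=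
  p ∈ S ∧ p ∈ interior L.dom ∧ ∀ z ∈ S ∩ L.dom, L.breg p x ≤ L.breg z x

/-- The Bregman projection of `x` onto `S` (as a function; well defined whenever the Bregman
projection exists, since it is then unique). -/
def proj (L : LegendreFn X) (S : Set X) (x : X) : X :=
  @Classical.epsilon X ⟨0⟩ (L.IsBregProj S x)

end LegendreFn

/-- Condition SC (sequential consistency). -/
def SCcond {X : Type*} [NormedAddCommGroup X] [InnerProductSpace ℝ X] [FiniteDimensional ℝ X]
    (L : LegendreFn X) : Prop :=
  ∀ z y : ℕ → X, (∀ n, z n ∈ interior L.dom) → (∀ n, y n ∈ interior L.dom) →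
    Bornology.IsBounded (Set.range z) → Bornology.IsBounded (Set.range y) →
    Tendsto (fun n => L.breg (z n) (y n)) atTop (nhds 0) →
    Tendsto (fun n => z n - y n) atTop (nhds 0)

/-- Assumption H0: `C ≠ X`, `dom φ*` is open and `int (dom φ) ∩ C ≠ ∅`
(`φ` being Legendre is part of the `LegendreFn` structure). -/
def H0 {X : Type*} [NormedAddCommGroup X] [InnerProductSpace ℝ X] [FiniteDimensional ℝ X]
    (L : LegendreFn X) (C : Set X) : Prop :=
  C ≠ Set.univ ∧ IsOpen L.domConj ∧ (interior L.dom ∩ C).Nonempty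

/-- `G` is the Moore–Penrose pseudoinverse of `T`. -/
def IsMPInv {E F : Type*} [NormedAddCommGroup E] [InnerProductSpace ℝ E] [FiniteDimensional ℝ E]
    [NormedAddCommGroup F] [InnerProductSpace ℝ F] [FiniteDimensional ℝ F]
    (T : E →L[ℝ] F) (G : F →L[ℝ] E) : Prop :=
  T ∘L G ∘L T = T ∧ G ∘L T ∘L G = G ∧
    ContinuousLinearMap.adjoint (T ∘L G) = T ∘L G ∧
    ContinuousLinearMap.adjoint (G ∘L T) = G ∘L T

/-- The orthogonal projection onto a subspace, as a map `X →L[ℝ] X`. -/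
def projL {X : Type*} [NormedAddCommGroup X] [InnerProductSpace ℝ X] [FiniteDimensional ℝ X]
    (K : Submodule ℝ X) : X →L[ℝ] X :=
  K.subtypeL.comp K.orthogonalProjectionOnto

/-- The set `K(x)` of points having the same Bregman projection onto `C` as `x` and not larger
Bregman distance to `C`. -/
def Kset {X : Type*} [NormedAddCommGroup X] [InnerProductSpace ℝ X] [FiniteDimensional ℝ X]
    (L : LegendreFn X) (C : Set X) (x : X) : Set X :=
  {z | z ∈ interior L.dom ∧ L.proj C z = L.proj C x ∧ L.distTo C z ≤ L.distTo C x}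

section Affine

variable {X Y : Type*} [NormedAddCommGroup X] [InnerProductSpace ℝ X] [FiniteDimensional ℝ X]
  [NormedAddCommGroup Y] [InnerProductSpace ℝ Y] [FiniteDimensional ℝ Y]
  {I : Type*} {Yf : I → Type*} [∀ i, NormedAddCommGroup (Yf i)]
  [∀ i, InnerProductSpace ℝ (Yf i)] [∀ i, FiniteDimensional ℝ (Yf i)]

/-- Assumption H2₁: `φ*` is twice differentiable (with second derivative `hess`), and for all
`x ∈ int (dom φ) ∩ C`, `A ∘ ∇²φ*(∇φ(x)) ≠ 0` and
`sup_i ‖Aᵢ* (Aᵢ ∇²φ*(∇φ(x)) Aᵢ*)† Aᵢ‖ < ∞`. -/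
def H21 (L : LegendreFn X) (A : ∀ i, X →L[ℝ] Yf i) (AY : X →L[ℝ] Y) (C : Set X)
    (hess : X → X →L[ℝ] X) : Prop :=
  (∀ y ∈ interior L.domConj, HasFDerivAt L.gradConj (hess y) y) ∧
  ∀ x ∈ interior L.dom ∩ C,
    AY ∘L hess (L.grad x) ≠ 0 ∧
    ∃ M : ℝ, ∀ (i : I) (G : Yf i →L[ℝ] Yf i),
      IsMPInv (A i ∘L hess (L.grad x) ∘L ContinuousLinearMap.adjoint (A i)) G →
      ‖ContinuousLinearMap.adjoint (A i) ∘L G ∘L A i‖ ≤ M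

/-- The orthogonal projection `Q_i(x)` onto `range (H(x) Aᵢ*)`, where `H(x)` (here `Hrt x`) is
the positive square root of `∇²φ*(∇φ(x))`. -/
def Qproj (A : ∀ i, X →L[ℝ] Yf i) (Hrt : X → X →L[ℝ] X) (i : I) (x : X) : X →L[ℝ] X :=
  projL (LinearMap.range (Hrt x ∘L ContinuousLinearMap.adjoint (A i)).toLinearMap)

/-- The subspace `V(x) = range (H(x) A*)`. -/
def Vsub (AY : X →L[ℝ] Y) (Hrt : X → X →L[ℝ] X) (x : X) : Submodule ℝ X :=
  LinearMap.range (Hrt x ∘L ContinuousLinearMap.adjoint AY).toLinearMap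

/-- `γ_𝒞(x) = inf_{v ∈ V(x) \ {0}} sup_i ‖Q_i(x) v‖² / ‖v‖²`. -/
def gammaC (A : ∀ i, X →L[ℝ] Yf i) (AY : X →L[ℝ] Y) (Hrt : X → X →L[ℝ] X) (x : X) : ℝ :=
  ⨅ v : {v : X // v ∈ Vsub AY Hrt x ∧ v ≠ 0},
    ⨆ i : I, ‖Qproj A Hrt i x v.1‖ ^ 2 / ‖v.1‖ ^ 2

/-- `σ_𝒞(x)`, the (deterministic, greedy) contraction factor. -/
def sigmaC (L : LegendreFn X) (Cs : I → Set X) (C : Set X) (γ : X → ℝ) (x : X) : ℝ :=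
  if x ∈ C then 1 - γ x
  else ⨆ z : ↥(Kset L C x \ C), ⨅ i : I, L.distTo C (L.proj (Cs i) z) / L.distTo C z

end Affine

section Stochastic

variable {X Y : Type*} [NormedAddCommGroup X] [InnerProductSpace ℝ X] [FiniteDimensional ℝ X]
  [NormedAddCommGroup Y] [InnerProductSpace ℝ Y] [FiniteDimensional ℝ Y]
  {I : Type*} {Yf : I → Type*} [∀ i, NormedAddCommGroup (Yf i)]
  [∀ i, InnerProductSpace ℝ (Yf i)] [∀ i, FiniteDimensional ℝ (Yf i)]
  {Ω : Type*} [MeasurableSpace Ω]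

/-- Assumption H2₂ (stochastic version of H2₁, with an essential supremum). -/
def H22 (L : LegendreFn X) (A : ∀ i, X →L[ℝ] Yf i) (AY : X →L[ℝ] Y) (C : Set X)
    (hess : X → X →L[ℝ] X) (P : Measure Ω) (ξ : Ω → I) : Prop :=
  (∀ y ∈ interior L.domConj, HasFDerivAt L.gradConj (hess y) y) ∧
  ∀ x ∈ interior L.dom ∩ C,
    AY ∘L hess (L.grad x) ≠ 0 ∧
    ∃ M : ℝ, ∀ᵐ ω ∂P, ∀ G : Yf (ξ ω) →L[ℝ] Yf (ξ ω),
      IsMPInv (A (ξ ω) ∘L hess (L.grad x) ∘L ContinuousLinearMap.adjoint (A (ξ ω))) G →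
      ‖ContinuousLinearMap.adjoint (A (ξ ω)) ∘L G ∘L A (ξ ω)‖ ≤ M

/-- `Q̄(x) = E[Q_ξ(x)]` (Bochner expectation). -/
def Qbar (A : ∀ i, X →L[ℝ] Yf i) (Hrt : X → X →L[ℝ] X) (P : Measure Ω) (ξ : Ω → I) (x : X) :
    X →L[ℝ] X :=
  ∫ ω, Qproj A Hrt (ξ ω) x ∂P

/-- `γ_{𝒞,μ}(x) = inf_{v ∈ V(x) \ {0}} ⟪Q̄(x) v, v⟫ / ‖v‖²`. -/
def gammaCmu (A : ∀ i, X →L[ℝ] Yf i) (AY : X →L[ℝ] Y) (Hrt : X → X →L[ℝ] X)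
    (P : Measure Ω) (ξ : Ω → I) (x : X) : ℝ :=
  ⨅ v : {v : X // v ∈ Vsub AY Hrt x ∧ v ≠ 0},
    ⟪Qbar A Hrt P ξ x v.1, v.1⟫_ℝ / ‖v.1‖ ^ 2

/-- `σ_{𝒞,μ}(x)`, the stochastic contraction factor. -/
def sigmaCmu (L : LegendreFn X) (Cs : I → Set X) (C : Set X) (γ : X → ℝ)
    (P : Measure Ω) (ξ : Ω → I) (x : X) : ℝ :=
  if x ∈ C then 1 - γ x
  else ⨆ z : ↥(Kset L C x \ C),
    (∫ ω, L.distTo C (L.proj (Cs (ξ ω)) z) ∂P) / L.distTo C z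

/-- `D̄_C(x) = E[D_{C_ξ}(x)]`. -/
def DbarFn (L : LegendreFn X) (Cs : I → Set X) (P : Measure Ω) (ξ : Ω → I) (x : X) : ℝ :=
  ∫ ω, L.distTo (Cs (ξ ω)) x ∂P

end Stochastic

/-!
For a fixed `c ∈ int (dom φ) ∩ C`, the integrand `D_{C_ξ}(x)` is nonnegative and almost surely
bounded by `D_φ(c, x)`, which is continuous in `x`. Each `D_S` is continuous on `int (dom φ)`,
since `D_S(x) = ⟪x, ∇φ(x)⟫ - φ(x) - (φ + ι_S)*(∇φ(x))`: the gradient of a differentiable convex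
function is continuous, and `(φ + ι_S)*` is convex and finite on the open set `dom φ*`. Dominated
convergence then makes `D̄_C` continuous. Finally `D̄_C(x) = 0` iff `D_{C_ξ}(x) = 0` almost surely,
and `D_S(x) = 0` forces `x ∈ S`: the Bregman projection `p` of `x` onto `S` has `D_φ(p, x) = 0`,
so `p = x` by strict convexity of `φ` on `int (dom φ)`.
-/
section ConvexGradient

variable {X : Type*} [NormedAddCommGroup X] [InnerProductSpace ℝ X] [CompleteSpace X]
  {f : X → ℝ} {s : Set X} {x z g : X}

lemma ConvexOn.add_inner_le_of_hasGradientAt (hf : ConvexOn ℝ s f) (hx : x ∈ s) (hz : z ∈ s)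
    (hg : HasGradientAt f g x) : f x + ⟪z - x, g⟫_ℝ ≤ f z := by
  let γ := AffineMap.lineMap (k := ℝ) x z
  have hline : HasDerivAt (f ∘ γ) ⟪z - x, g⟫_ℝ 0 := by
    have hf' := hasGradientAt_iff_hasFDerivAt.1 hg
    rw [← AffineMap.lineMap_apply_zero (k := ℝ) x z] at hf'
    simpa [real_inner_comm] using hf'.comp_hasDerivAt (0 : ℝ) AffineMap.hasDerivAt_lineMap
  have hseg : ConvexOn ℝ (Icc (0 : ℝ) 1) (f ∘ γ) :=
    (hf.comp_affineMap γ).subset (fun t ht => hf.1.lineMap_mem hx hz ht) (convex_Icc 0 1)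
  have := hseg.le_slope_of_hasDerivAt (left_mem_Icc.2 zero_le_one)
    (right_mem_Icc.2 zero_le_one) zero_lt_one hline
  simp only [slope_def_field, Function.comp_apply, AffineMap.lineMap_apply_one,
    AffineMap.lineMap_apply_zero, sub_zero, div_one, γ] at this
  linarith

lemma HasGradientAt.eq_of_eventually_add_inner_le {v : X} (hg : HasGradientAt f g x)
    (hv : ∀ᶠ z in 𝓝 x, f x + ⟪z - x, v⟫_ℝ ≤ f z) : v = g := by
  have hmin : IsLocalMin (fun z => f z - ⟪v, z⟫_ℝ) x := by
    filter_upwards [hv] with z hz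
    rw [real_inner_comm, inner_sub_right] at hz
    linarith
  have hzero := congr($(hmin.hasFDerivAt_eq_zero
    ((hasGradientAt_iff_hasFDerivAt.1 hg).sub (innerSL ℝ v).hasFDerivAt)) (g - v))
  simp only [sub_apply, InnerProductSpace.toDual_apply_apply, innerSL_apply_apply,
    zero_apply, ← inner_sub_left] at hzero
  exact (sub_eq_zero.1 (inner_self_eq_zero.1 hzero)).symm

lemma ConvexOn.continuousOn_of_hasGradientAt [FiniteDimensional ℝ X] {g : X → X} (hs : IsOpen s)
    (hf : ConvexOn ℝ s f) (hg : ∀ x ∈ s, HasGradientAt f (g x) x) : ContinuousOn g s := by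
  intro x hx
  refine ContinuousAt.continuousWithinAt ?_
  obtain ⟨K, t, ht, hlip⟩ := hf.locallyLipschitzOn hs hx
  rw [nhdsWithin_eq_nhds.2 (hs.mem_nhds hx)] at ht
  have hbound : ∀ᶠ y in 𝓝 x, g y ∈ Metric.closedBall (0 : X) K := by
    filter_upwards [eventually_mem_nhds_iff.2 ht, hs.mem_nhds hx] with y hty hy
    rw [mem_closedBall_zero_iff, ← (InnerProductSpace.toDual ℝ X).norm_map]
    exact (hasGradientAt_iff_hasFDerivAt.1 (hg y hy)).le_of_lipschitzOn hty hlip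
  refine (isCompact_closedBall 0 _).tendsto_nhds_of_unique_mapClusterPt hbound fun v _ hv => ?_
  -- `v` is the limit of `g` along the nontrivial filter `𝓝 x ⊓ comap g (𝓝 v)`, and passing to
  -- the limit in the gradient inequality at nearby points makes `v` a subgradient at `x`.
  set l := 𝓝 x ⊓ comap g (𝓝 v)
  have : l.NeBot := by
    rw [← map_neBot_iff g, Filter.push_pull, inf_comm]
    exact hv
  refine (hg x hx).eq_of_eventually_add_inner_le ?_
  filter_upwards [hs.mem_nhds hx] with z hz
  have hlim : Tendsto (fun y => f y + ⟪z - y, g y⟫_ℝ) l (𝓝 (f x + ⟪z - x, v⟫_ℝ)) :=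
    (((hf.continuousOn hs).continuousAt (hs.mem_nhds hx)).tendsto.mono_left inf_le_left).add
      ((tendsto_const_nhds.sub (tendsto_id.mono_left inf_le_left)).inner
        (tendsto_comap.mono_left inf_le_right))
  refine le_of_tendsto hlim ?_
  filter_upwards [mem_inf_of_left (hs.mem_nhds hx)] with y hy
  exact hf.add_inner_le_of_hasGradientAt hy hz (hg y hy)

lemma StrictConvexOn.eq_of_le_add_inner_gradient (hf : StrictConvexOn ℝ s f) (hx : x ∈ s)
    (hz : z ∈ s) (hg : HasGradientAt f g x) (h : f z ≤ f x + ⟪z - x, g⟫_ℝ) : z = x := by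
  by_contra hne
  have hmid : (1 / 2 : ℝ) • z + (1 / 2 : ℝ) • x ∈ s := hf.1 hz hx (by norm_num) (by norm_num)
    (by norm_num)
  have hlt := hf.2 hz hx hne (by norm_num : (0 : ℝ) < 1 / 2) (by norm_num : (0 : ℝ) < 1 / 2)
    (by norm_num)
  have hle := hf.convexOn.add_inner_le_of_hasGradientAt hx hmid hg
  have hsub : (1 / 2 : ℝ) • z + (1 / 2 : ℝ) • x - x = (1 / 2 : ℝ) • (z - x) := by module
  rw [hsub, real_inner_smul_left] at hle
  simp only [smul_eq_mul] at hlt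
  linarith

end ConvexGradient

namespace LegendreFn

variable {X : Type*} [NormedAddCommGroup X] [InnerProductSpace ℝ X] [FiniteDimensional ℝ X]
  (L : LegendreFn X) {S : Set X} {x z : X}

lemma add_inner_grad_le (hx : x ∈ interior L.dom) (hz : z ∈ L.dom) :
    L.f x + ⟪z - x, L.grad x⟫_ℝ ≤ L.f z :=
  L.convexOn.add_inner_le_of_hasGradientAt (interior_subset hx) hz (L.hasGrad x hx)

lemma breg_nonneg (hx : x ∈ interior L.dom) (hz : z ∈ L.dom) : 0 ≤ L.breg z x := by
  have := L.add_inner_grad_le hx hz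
  rw [breg]
  linarith

@[simp]
lemma breg_self : L.breg x x = 0 := by
  simp [breg]

lemma eq_of_breg_nonpos (hx : x ∈ interior L.dom) (hz : z ∈ interior L.dom)
    (h : L.breg z x ≤ 0) : z = x := by
  have hstrict : StrictConvexOn ℝ (interior L.dom) L.f :=
    L.strict _ (fun y hy => ⟨interior_subset hy, L.grad y, fun w hw => by
      rw [real_inner_comm]; exact L.add_inner_grad_le hy hw⟩) L.dom_convex.interior
  refine hstrict.eq_of_le_add_inner_gradient hx hz (L.hasGrad x hx) ?_
  rw [breg] at h
  linarith

lemma continuousOn_f : ContinuousOn L.f (interior L.dom) :=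
  L.convexOn.continuousOn_interior

lemma continuousOn_grad : ContinuousOn L.grad (interior L.dom) :=
  (L.convexOn.subset interior_subset L.dom_convex.interior).continuousOn_of_hasGradientAt
    isOpen_interior L.hasGrad

lemma continuousOn_breg (z : X) : ContinuousOn (L.breg z) (interior L.dom) :=
  (continuousOn_const.sub L.continuousOn_f).sub
    ((continuousOn_const.sub continuousOn_id).inner L.continuousOn_grad)

lemma bddBelow_breg_image (hx : x ∈ interior L.dom) :
    BddBelow ((fun z => L.breg z x) '' (S ∩ L.dom)) :=
  ⟨0, by rintro _ ⟨z, hz, rfl⟩; exact L.breg_nonneg hx hz.2⟩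

lemma distTo_nonneg (hx : x ∈ interior L.dom) : 0 ≤ L.distTo S x := by
  rcases (S ∩ L.dom).eq_empty_or_nonempty with h | h
  · simp [distTo, h]
  · exact le_csInf (h.image _) (by rintro _ ⟨z, hz, rfl⟩; exact L.breg_nonneg hx hz.2)

lemma distTo_le_breg (hx : x ∈ interior L.dom) (hz : z ∈ S ∩ L.dom) :
    L.distTo S x ≤ L.breg z x :=
  csInf_le (L.bddBelow_breg_image hx) (mem_image_of_mem _ hz)

-- The second alternative is the junk value `sInf ∅ = 0`.
lemma distTo_lt_iff (hx : x ∈ interior L.dom) {t : ℝ} :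
    L.distTo S x < t ↔ (∃ z ∈ S ∩ L.dom, L.breg z x < t) ∨ (S ∩ L.dom = ∅ ∧ 0 < t) := by
  rcases (S ∩ L.dom).eq_empty_or_nonempty with h | h
  · simp [distTo, h]
  · rw [distTo, csInf_lt_iff (L.bddBelow_breg_image hx) (h.image _), exists_mem_image]
    simp [h.ne_empty]

lemma distTo_eq_zero_iff (hSc : IsClosed S) (hSco : Convex ℝ S)
    (hSi : (S ∩ interior L.dom).Nonempty) (hx : x ∈ interior L.dom) :
    L.distTo S x = 0 ↔ x ∈ S := by
  refine ⟨fun h => ?_, fun hxS => le_antisymm ?_ (L.distTo_nonneg hx)⟩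
  · obtain ⟨p, ⟨hpS, hpi⟩, hmin⟩ := L.proj_exists S hSc hSco hSi x hx
    have hp : L.breg p x ≤ L.distTo S x := by
      refine le_csInf ⟨_, mem_image_of_mem _ ⟨hpS, interior_subset hpi⟩⟩ ?_
      rintro _ ⟨w, hw, rfl⟩
      have := hmin w hw
      simp only [breg, inner_sub_left]
      linarith
    exact L.eq_of_breg_nonpos hx hpi (h ▸ hp) ▸ hpS
  · simpa using L.distTo_le_breg hx ⟨hxS, interior_subset hx⟩

lemma ae_norm_distTo_le_breg {I Ω : Type*} [MeasurableSpace Ω] {P : Measure Ω} {Cs : I → Set X}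
    {ξ : Ω → I} {c : X} (hc : c ∈ L.dom) (hcae : ∀ᵐ ω ∂P, c ∈ Cs (ξ ω))
    (hx : x ∈ interior L.dom) : ∀ᵐ ω ∂P, ‖L.distTo (Cs (ξ ω)) x‖ ≤ L.breg c x := by
  filter_upwards [hcae] with ω hω
  rw [Real.norm_of_nonneg (L.distTo_nonneg hx)]
  exact L.distTo_le_breg hx ⟨hω, hc⟩

/-- The conjugate of `φ + ι_T`. -/
def conjOn (T : Set X) (y : X) : ℝ :=
  sSup ((fun z => ⟪z, y⟫_ℝ - L.f z) '' T)

lemma convexOn_conjOn {T : Set X} (hT : T.Nonempty) :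
    ConvexOn ℝ {y | BddAbove ((fun z => ⟪z, y⟫_ℝ - L.f z) '' T)} (L.conjOn T) := by
  have key : ∀ {y₁ y₂ : X} {a b B₁ B₂ : ℝ}, 0 ≤ a → 0 ≤ b → a + b = 1 →
      B₁ ∈ upperBounds ((fun z => ⟪z, y₁⟫_ℝ - L.f z) '' T) →
      B₂ ∈ upperBounds ((fun z => ⟪z, y₂⟫_ℝ - L.f z) '' T) →
      a * B₁ + b * B₂ ∈ upperBounds ((fun z => ⟪z, a • y₁ + b • y₂⟫_ℝ - L.f z) '' T) := by
    rintro y₁ y₂ a b B₁ B₂ ha hb hab h₁ h₂ _ ⟨z, hz, rfl⟩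
    have e : ⟪z, a • y₁ + b • y₂⟫_ℝ - L.f z =
        a * (⟪z, y₁⟫_ℝ - L.f z) + b * (⟪z, y₂⟫_ℝ - L.f z) := by
      rw [inner_add_right, real_inner_smul_right, real_inner_smul_right]
      linear_combination L.f z * hab
    dsimp only
    rw [e]
    gcongr
    exacts [h₁ (mem_image_of_mem _ hz), h₂ (mem_image_of_mem _ hz)]
  refine ⟨fun y₁ ⟨B₁, h₁⟩ y₂ ⟨B₂, h₂⟩ a b ha hb hab => ⟨_, key ha hb hab h₁ h₂⟩,
    fun y₁ h₁ y₂ h₂ a b ha hb hab => csSup_le (hT.image _) (key ha hb hab ?_ ?_)⟩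
  exacts [fun _ hr => le_csSup h₁ hr, fun _ hr => le_csSup h₂ hr]

lemma continuousOn_conjOn (hopen : IsOpen L.domConj) {T : Set X} (hTd : T ⊆ L.dom)
    (hT : T.Nonempty) : ContinuousOn (L.conjOn T) L.domConj :=
  (L.convexOn_conjOn hT).continuousOn_interior.mono <| hopen.subset_interior_iff.2 fun y hy =>
    ((L.domConj_spec y).1 hy).mono (image_mono hTd)

lemma grad_mem_domConj (hx : x ∈ interior L.dom) : L.grad x ∈ L.domConj := by
  refine (L.domConj_spec _).2 ⟨⟪x, L.grad x⟫_ℝ - L.f x, ?_⟩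
  rintro _ ⟨z, hz, rfl⟩
  have := L.add_inner_grad_le hx hz
  rw [inner_sub_left] at this
  dsimp only
  linarith

lemma distTo_eq_inner_grad_sub_conjOn (hx : x ∈ interior L.dom) (hS : (S ∩ L.dom).Nonempty) :
    L.distTo S x = ⟪x, L.grad x⟫_ℝ - L.f x - L.conjOn (S ∩ L.dom) (L.grad x) := by
  have himage : (fun z => L.breg z x) '' (S ∩ L.dom) = (fun r => ⟪x, L.grad x⟫_ℝ - L.f x - r) ''
      ((fun z => ⟪z, L.grad x⟫_ℝ - L.f z) '' (S ∩ L.dom)) := by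
    rw [← image_comp]
    refine image_congr fun z _ => ?_
    simp only [Function.comp_apply, breg, inner_sub_left]
    ring
  rw [distTo, himage, conjOn]
  refine ((Antitone.map_csSup_of_continuousAt (by fun_prop) (fun _ _ h => sub_le_sub_left h _)
    (hS.image _) ?_)).symm
  exact ((L.domConj_spec _).1 (L.grad_mem_domConj hx)).mono (image_mono inter_subset_right)

lemma continuousOn_distTo (hopen : IsOpen L.domConj) (S : Set X) :
    ContinuousOn (L.distTo S) (interior L.dom) := by
  rcases (S ∩ L.dom).eq_empty_or_nonempty with h | h
  · have hzero : L.distTo S = fun _ => 0 := by ext; simp [distTo, h]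
    exact hzero ▸ continuousOn_const
  refine ContinuousOn.congr ?_ fun x hx => L.distTo_eq_inner_grad_sub_conjOn hx h
  exact (continuousOn_id.inner L.continuousOn_grad).sub L.continuousOn_f |>.sub <|
    (L.continuousOn_conjOn hopen inter_subset_right h).comp L.continuousOn_grad
      fun _ => L.grad_mem_domConj

lemma isClosed_sublevel (a : ℝ) : IsClosed {z ∈ L.dom | L.f z ≤ a} :=
  L.closedEpi.preimage (continuous_id.prodMk continuous_const)

section Measurability

variable [MeasurableSpace X] [BorelSpace X]

lemma measurableSet_dom : MeasurableSet L.dom := by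
  have h : L.dom = ⋃ n : ℕ, {z ∈ L.dom | L.f z ≤ n} := by
    ext z
    simp only [mem_iUnion, mem_ofPred_eq]
    exact ⟨fun hz => (exists_nat_ge (L.f z)).imp fun _ hn => ⟨hz, hn⟩, fun ⟨_, hz, _⟩ => hz⟩
  rw [h]
  exact .iUnion fun n => (L.isClosed_sublevel n).measurableSet

lemma measurableSet_sep_f_lt {g : X → ℝ} (hg : Continuous g) :
    MeasurableSet {z ∈ L.dom | L.f z < g z} := by
  have h : {z ∈ L.dom | L.f z < g z} =
      ⋃ q : ℚ, {z ∈ L.dom | L.f z ≤ q} ∩ {z | (q : ℝ) < g z} := by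
    ext z
    simp only [mem_iUnion, mem_inter_iff, mem_ofPred_eq]
    constructor
    · rintro ⟨hz, hlt⟩
      obtain ⟨q, h₁, h₂⟩ := exists_rat_btwn hlt
      exact ⟨q, ⟨hz, h₁.le⟩, h₂⟩
    · rintro ⟨q, ⟨hz, h₁⟩, h₂⟩
      exact ⟨hz, h₁.trans_lt h₂⟩
  rw [h]
  exact .iUnion fun q =>
    (L.isClosed_sublevel q).measurableSet.inter (isOpen_lt continuous_const hg).measurableSet

lemma measurableSet_breg_lt (x : X) (t : ℝ) : MeasurableSet {z ∈ L.dom | L.breg z x < t} := by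
  have h : {z ∈ L.dom | L.breg z x < t} =
      {z ∈ L.dom | L.f z < t + L.f x + ⟪z - x, L.grad x⟫_ℝ} := by
    ext z
    refine and_congr_right fun _ => ?_
    rw [breg]
    constructor <;> intro h <;> linarith
  exact h ▸ L.measurableSet_sep_f_lt (by fun_prop)

lemma measurable_distTo_family {I : Type*} [MeasurableSpace I] {Cs : I → Set X}
    (hSV : ∀ Z : Set X, MeasurableSet Z → MeasurableSet {i | (Cs i ∩ Z).Nonempty})
    (hx : x ∈ interior L.dom) : Measurable fun i => L.distTo (Cs i) x := by
  refine measurable_of_Iio fun t => ?_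
  have h : (fun i => L.distTo (Cs i) x) ⁻¹' Iio t =
      {i | (Cs i ∩ {z ∈ L.dom | L.breg z x < t}).Nonempty} ∪
        ({i | (Cs i ∩ L.dom).Nonempty}ᶜ ∩ {_i | 0 < t}) := by
    ext i
    simp only [mem_preimage, mem_Iio, L.distTo_lt_iff hx, mem_union, mem_inter_iff,
      mem_compl_iff, mem_ofPred_eq, not_nonempty_iff_eq_empty]
    congr! 1
    exact ⟨fun ⟨z, hz, hlt⟩ => ⟨z, hz.1, hz.2, hlt⟩, fun ⟨z, hzS, hz, hlt⟩ => ⟨z, ⟨hzS, hz⟩, hlt⟩⟩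
  rw [h]
  exact (hSV _ (L.measurableSet_breg_lt x t)).union
    ((hSV _ L.measurableSet_dom).compl.inter (.const _))

end Measurability

end LegendreFn

section MeanBregmanDistance

variable {X : Type*} [NormedAddCommGroup X] [InnerProductSpace ℝ X] [FiniteDimensional ℝ X]
  [MeasurableSpace X] [BorelSpace X] {I : Type*} [MeasurableSpace I] {Ω : Type*}
  [MeasurableSpace Ω] {P : Measure Ω} (L : LegendreFn X) {Cs : I → Set X} {ξ : Ω → I} {c x : X}

variable (hSV : ∀ Z : Set X, MeasurableSet Z → MeasurableSet {i | (Cs i ∩ Z).Nonempty})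
  (hξ : Measurable ξ)
include hSV hξ

lemma continuousOn_DbarFn [IsFiniteMeasure P] (hopen : IsOpen L.domConj) (hc : c ∈ L.dom)
    (hcae : ∀ᵐ ω ∂P, c ∈ Cs (ξ ω)) : ContinuousOn (DbarFn L Cs P ξ) (interior L.dom) := by
  intro x hx
  have hnhds : interior L.dom ∈ 𝓝 x := isOpen_interior.mem_nhds hx
  have hbreg : ∀ᶠ y in 𝓝 x, L.breg c y < L.breg c x + 1 :=
    ((L.continuousOn_breg c).continuousAt hnhds).eventually (gt_mem_nhds (lt_add_one _))
  refine (continuousAt_of_dominated (bound := fun _ => L.breg c x + 1) ?_ ?_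
    (integrable_const _) ?_).continuousWithinAt
  · filter_upwards [hnhds] with y hy
    exact ((L.measurable_distTo_family hSV hy).comp hξ).aestronglyMeasurable
  · filter_upwards [hnhds, hbreg] with y hy hyx
    filter_upwards [L.ae_norm_distTo_le_breg hc hcae hy] with ω hω
    exact hω.trans hyx.le
  · exact .of_forall fun ω => (L.continuousOn_distTo hopen _).continuousAt hnhds

lemma DbarFn_eq_zero_iff [IsFiniteMeasure P] (hCc : ∀ i, IsClosed (Cs i))
    (hCv : ∀ i, Convex ℝ (Cs i)) (hc : c ∈ interior L.dom) (hcae : ∀ᵐ ω ∂P, c ∈ Cs (ξ ω))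
    (hx : x ∈ interior L.dom) : DbarFn L Cs P ξ x = 0 ↔ ∀ᵐ ω ∂P, x ∈ Cs (ξ ω) := by
  have hint : Integrable (fun ω => L.distTo (Cs (ξ ω)) x) P :=
    .mono' (integrable_const _) ((L.measurable_distTo_family hSV hx).comp hξ).aestronglyMeasurable
      (L.ae_norm_distTo_le_breg (interior_subset hc) hcae hx)
  rw [DbarFn, integral_eq_zero_iff_of_nonneg (fun ω => L.distTo_nonneg hx) hint]
  refine eventually_congr ?_
  filter_upwards [hcae] with ω hω
  exact L.distTo_eq_zero_iff (hCc _) (hCv _) ⟨c, hω, hc⟩ hx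

end MeanBregmanDistance

theorem stmt_4_general {X : Type*} [NormedAddCommGroup X] [InnerProductSpace ℝ X]
    [FiniteDimensional ℝ X] [MeasurableSpace X] [BorelSpace X]
    {I : Type*} [MeasurableSpace I] {Ω : Type*} [MeasurableSpace Ω]
    (P : Measure Ω) [IsProbabilityMeasure P]
    (L : LegendreFn X) (Cs : I → Set X)
    (hCs : ∀ i, (Cs i).Nonempty ∧ IsClosed (Cs i) ∧ Convex ℝ (Cs i))
    (hSV : ∀ Z : Set X, MeasurableSet Z → MeasurableSet {i | (Cs i ∩ Z).Nonempty})
    (ξ : Ω → I) (hξ : Measurable ξ)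
    (C : Set X) (hC : C = {x | ∀ᵐ ω ∂P, x ∈ Cs (ξ ω)})
    (hH0 : H0 L C) :
    LowerSemicontinuousOn (DbarFn L Cs P ξ) (interior L.dom) ∧
      ∀ x ∈ interior L.dom, (x ∈ C ↔ DbarFn L Cs P ξ x = 0) := by
  subst hC
  obtain ⟨-, hopen, c, hc, hcC⟩ := hH0
  refine ⟨(continuousOn_DbarFn L hSV hξ hopen (interior_subset hc) hcC).lowerSemicontinuousOn,
    fun x hx => ?_⟩
  rw [DbarFn_eq_zero_iff L hSV hξ (fun i => (hCs i).2.1) (fun i => (hCs i).2.2) hc hcC hx]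
  rfl

/-- In the stochastic convex feasibility problem, under H0, the mean Bregman
distance `D̄_C = E[D_{C_ξ}(·)]` is lower semicontinuous on `int (dom φ)`, and it vanishes at
`x ∈ int (dom φ)` exactly when `x ∈ C`. -/
theorem stmt_4 {X : Type*} [NormedAddCommGroup X] [InnerProductSpace ℝ X]
    [FiniteDimensional ℝ X] [MeasurableSpace X] [BorelSpace X]
    {I : Type*} [MeasurableSpace I] {Ω : Type*} [MeasurableSpace Ω]
    (P : Measure Ω) [IsProbabilityMeasure P]
    (L : LegendreFn X) (Cs : I → Set X)
    (hCs : ∀ i, (Cs i).Nonempty ∧ IsClosed (Cs i) ∧ Convex ℝ (Cs i))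
    (hSV : ∀ Z : Set X, MeasurableSet Z → MeasurableSet {i | (Cs i ∩ Z).Nonempty})
    (ξ : Ω → I) (hξ : Measurable ξ)
    (C : Set X) (hC : C = {x | ∀ᵐ ω ∂P, x ∈ Cs (ξ ω)}) (hCne : C.Nonempty)
    (hH0 : H0 L C) :
    LowerSemicontinuousOn (DbarFn L Cs P ξ) (interior L.dom) ∧
      ∀ x ∈ interior L.dom, (x ∈ C ↔ DbarFn L Cs P ξ x = 0) :=
  stmt_4_general P L Cs hCs hSV ξ hξ C hC hH0
end
end

section
/- Suppose H0 holds. Then there exists a μ-negligible set J ⊆ I such that C = ⋂_{i ∈ I∖J} C_i. Moreover, if (ξ_k) is a sequence of I-valued random variables each having the same distribution μ as ξ, then there exists a P-negligible set N ⊆ Ω such that, for every k ∈ ℕ, C = ⋂_{ω ∈ Ω∖N} C_{ξ_k(ω)}. -/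
open Set Filter Topology MeasureTheory ProbabilityTheory
open scoped InnerProductSpace ENNReal Classical

noncomputable section

def essInter {X I : Type*} [MeasurableSpace I] (μ : Measure I) (Cs : I → Set X) : Set X :=
  {x | ∀ᵐ i ∂μ, x ∈ Cs i}

section EssInter

variable {X I : Type*} [MeasurableSpace I] {μ : Measure I} {Cs : I → Set X}

theorem essInter_map {Ω : Type*} [MeasurableSpace Ω] {P : Measure Ω} {f : Ω → I}
    (hf : Measurable f) (hmeas : ∀ x, MeasurableSet {i | x ∈ Cs i}) :
    essInter (P.map f) Cs = essInter P (fun ω => Cs (f ω)) := by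
  ext x
  exact ae_map_iff hf.aemeasurable (hmeas x)

theorem essInter_eq_biInter_compl {J : Set I} (hJ : μ J = 0)
    (hsub : ∀ i ∉ J, essInter μ Cs ⊆ Cs i) : essInter μ Cs = ⋂ i ∈ Jᶜ, Cs i := by
  refine Subset.antisymm (fun x hx => mem_iInter₂.2 fun i hi => hsub i hi hx) fun x hx => ?_
  refine ae_iff.2 (measure_mono_null (fun i hi => ?_) hJ)
  by_contra hiJ
  exact hi (mem_iInter₂.1 hx i hiJ)

/-- By separability only the exceptional indices of countably many points, dense in the essential
intersection, need to be discarded; closedness of the `Cs i` handles the remaining points. -/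
theorem exists_measurableSet_null_essInter_subset [TopologicalSpace X]
    [TopologicalSpace.PseudoMetrizableSpace X] [TopologicalSpace.SeparableSpace X]
    (hclosed : ∀ i, IsClosed (Cs i)) (hmeas : ∀ x, MeasurableSet {i | x ∈ Cs i}) :
    ∃ J, MeasurableSet J ∧ μ J = 0 ∧ ∀ i ∉ J, essInter μ Cs ⊆ Cs i := by
  obtain ⟨D, hDC, hDcount, hDdense⟩ :=
    (TopologicalSpace.IsSeparable.of_separableSpace (essInter μ Cs)).exists_countable_dense_subset
  refine ⟨⋃ x ∈ D, {i | x ∈ Cs i}ᶜ, .biUnion hDcount fun x _ => (hmeas x).compl,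
    (measure_biUnion_null_iff hDcount).2 fun x hx => ae_iff.1 (hDC hx), fun i hi => ?_⟩
  have hDi : D ⊆ Cs i := fun x hx => by
    by_contra h
    exact hi (mem_biUnion hx h)
  exact hDdense.trans ((hclosed i).closure_subset_iff.2 hDi)

end EssInter

theorem stmt_5_general {X : Type*} [NormedAddCommGroup X] [InnerProductSpace ℝ X]
    [FiniteDimensional ℝ X] [MeasurableSpace X] [BorelSpace X]
    {I : Type*} [MeasurableSpace I] {Ω : Type*} [MeasurableSpace Ω]
    (P : Measure Ω)
    (Cs : I → Set X)
    (hCs : ∀ i, (Cs i).Nonempty ∧ IsClosed (Cs i) ∧ Convex ℝ (Cs i))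
    (hSV : ∀ Z : Set X, MeasurableSet Z → MeasurableSet {i | (Cs i ∩ Z).Nonempty})
    (ξ : Ω → I) (hξ : Measurable ξ)
    (C : Set X) (hC : C = {x | ∀ᵐ ω ∂P, x ∈ Cs (ξ ω)}) :
    (∃ J : Set I, Measure.map ξ P J = 0 ∧ C = ⋂ i ∈ Jᶜ, Cs i) ∧
      ∀ ξs : ℕ → Ω → I, (∀ k, Measurable (ξs k)) →
        (∀ k, Measure.map (ξs k) P = Measure.map ξ P) →
        ∃ N : Set Ω, P N = 0 ∧ ∀ k, C = ⋂ ω ∈ Nᶜ, Cs (ξs k ω) := by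
  have hmeas : ∀ x, MeasurableSet {i | x ∈ Cs i} := fun x => by
    simpa [Set.Nonempty, eq_comm] using hSV {x} (measurableSet_singleton x)
  have hCξ : C = essInter (P.map ξ) Cs := hC.trans (essInter_map hξ hmeas).symm
  obtain ⟨J, hJ, hJ0, hsub⟩ :=
    exists_measurableSet_null_essInter_subset (μ := P.map ξ) (fun i => (hCs i).2.1) hmeas
  refine ⟨⟨J, hJ0, hCξ.trans (essInter_eq_biInter_compl hJ0 hsub)⟩, fun ξs hξs hlaw => ?_⟩
  have hN0 : P (⋃ k, ξs k ⁻¹' J) = 0 := measure_iUnion_null fun k => by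
    rw [← Measure.map_apply (hξs k) hJ, hlaw k, hJ0]
  refine ⟨⋃ k, ξs k ⁻¹' J, hN0, fun k => ?_⟩
  have hCk : C = essInter P (fun ω => Cs (ξs k ω)) := by
    rw [hCξ, ← hlaw k, essInter_map (hξs k) hmeas]
  rw [hCk]
  refine essInter_eq_biInter_compl hN0 fun ω hω => ?_
  rw [← hCk, hCξ]
  exact hsub _ fun h => hω (mem_iUnion.2 ⟨k, h⟩)

/-- Under H0, `C` coincides with the intersection of the `C_i` over the
complement of a `μ`-negligible set `J`, and, for any sequence of `I`-valued random variables
distributed as `ξ`, with the intersection of the `C_{ξ_k(ω)}` over `ω` outside a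
`P`-negligible set `N`. -/
theorem stmt_5 {X : Type*} [NormedAddCommGroup X] [InnerProductSpace ℝ X]
    [FiniteDimensional ℝ X] [MeasurableSpace X] [BorelSpace X]
    {I : Type*} [MeasurableSpace I] {Ω : Type*} [MeasurableSpace Ω]
    (P : Measure Ω) [IsProbabilityMeasure P]
    (L : LegendreFn X) (Cs : I → Set X)
    (hCs : ∀ i, (Cs i).Nonempty ∧ IsClosed (Cs i) ∧ Convex ℝ (Cs i))
    (hSV : ∀ Z : Set X, MeasurableSet Z → MeasurableSet {i | (Cs i ∩ Z).Nonempty})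
    (ξ : Ω → I) (hξ : Measurable ξ)
    (C : Set X) (hC : C = {x | ∀ᵐ ω ∂P, x ∈ Cs (ξ ω)}) (hCne : C.Nonempty)
    (hH0 : H0 L C) :
    (∃ J : Set I, Measure.map ξ P J = 0 ∧ C = ⋂ i ∈ Jᶜ, Cs i) ∧
      ∀ ξs : ℕ → Ω → I, (∀ k, Measurable (ξs k)) →
        (∀ k, Measure.map (ξs k) P = Measure.map ξ P) →
        ∃ N : Set Ω, P N = 0 ∧ ∀ k, C = ⋂ ω ∈ Nᶜ, Cs (ξs k ω) :=
  stmt_5_general P Cs hCs hSV ξ hξ C hC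
end
end
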